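/- arXiv:2106.14015 — 6 statements merged into one kernel-verified Lean document; each statement's English description precedes it below -/
import Mathlib

section
/- Let c⋆, cπ be unit vectors in ℝ^d. Then sup { δ'c⋆ : δ ∈ ℝ^d, ‖δ‖ = 1, δ'cπ ≤ 0 } equals sin θ(c⋆,cπ) when 0 ≤ θ(c⋆,cπ) < π/2, and equals 1 when θ(c⋆,cπ) ≥ π/2. -/
open RealInnerProductSpace Real

lemma exists_unit_orth {d : ℕ} (hd : 2 ≤ d) (v : EuclideanSpace ℝ (Fin d)) :
    ∃ u : EuclideanSpace ℝ (Fin d), ‖u‖ = 1 ∧ ⟪u, v⟫ = 0 := by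
  have htot : Module.finrank ℝ (ℝ ∙ v) + Module.finrank ℝ (ℝ ∙ v)ᗮ = d := by
    simpa [finrank_euclideanSpace] using (ℝ ∙ v).finrank_add_finrank_orthogonal
  have h1 : Module.finrank ℝ (ℝ ∙ v) ≤ 1 := by
    simpa using finrank_span_le_card (R := ℝ) ({v} : Set (EuclideanSpace ℝ (Fin d)))
  have hpos : 0 < Module.finrank ℝ (ℝ ∙ v)ᗮ := by omega
  obtain ⟨x, hx0⟩ := Module.finrank_pos_iff_exists_ne_zero.mp hpos
  have hxne : (x : EuclideanSpace ℝ (Fin d)) ≠ 0 := by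
    simpa [Submodule.coe_eq_zero] using hx0
  refine ⟨‖(x : EuclideanSpace ℝ (Fin d))‖⁻¹ • x, ?_, ?_⟩
  · simp [norm_smul, inv_mul_cancel₀ (norm_ne_zero_iff.mpr hxne)]
  · have h := x.2 v (Submodule.mem_span_singleton_self v)
    rw [real_inner_smul_left, real_inner_comm, h, mul_zero]

/-- for unit vectors `c⋆, cπ` in `ℝ^d` (`d ≥ 2`),
`sup { δ'c⋆ : ‖δ‖ = 1, δ'cπ ≤ 0 }` equals `sin θ(c⋆,cπ)` when `θ(c⋆,cπ) < π/2`
and equals `1` when `θ(c⋆,cπ) ≥ π/2`. -/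
theorem stmt1 (d : ℕ) (hd : 2 ≤ d) (cstar cpi : EuclideanSpace ℝ (Fin d))
    (hstar : ‖cstar‖ = 1) (hpi : ‖cpi‖ = 1) :
    (Real.arccos ⟪cstar, cpi⟫ < π / 2 →
      sSup {t : ℝ | ∃ δ : EuclideanSpace ℝ (Fin d),
        ‖δ‖ = 1 ∧ ⟪δ, cpi⟫ ≤ 0 ∧ t = ⟪δ, cstar⟫} =
        Real.sin (Real.arccos ⟪cstar, cpi⟫)) ∧
    (π / 2 ≤ Real.arccos ⟪cstar, cpi⟫ →
      sSup {t : ℝ | ∃ δ : EuclideanSpace ℝ (Fin d),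
        ‖δ‖ = 1 ∧ ⟪δ, cpi⟫ ≤ 0 ∧ t = ⟪δ, cstar⟫} = 1) := by
  constructor
  · intro h
    have hρ : 0 < ⟪cstar, cpi⟫ := Real.arccos_lt_pi_div_two.mp h
    rw [Real.sin_arccos]
    set w : EuclideanSpace ℝ (Fin d) := cstar - ⟪cstar, cpi⟫ • cpi with hw
    have hpipi : ⟪cpi, cpi⟫ = 1 := by
      rw [real_inner_self_eq_norm_sq, hpi]; norm_num
    have hss : ⟪cstar, cstar⟫ = 1 := by
      rw [real_inner_self_eq_norm_sq, hstar]; norm_num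
    have hwpi : ⟪w, cpi⟫ = 0 := by
      simp only [hw, inner_sub_left, real_inner_smul_left, hpipi, mul_one, sub_self]
    have hwn : ‖w‖ ^ 2 = 1 - ⟪cstar, cpi⟫ ^ 2 := by
      rw [← real_inner_self_eq_norm_sq]
      simp only [hw, inner_sub_left, inner_sub_right, real_inner_smul_left,
        real_inner_smul_right, hss, hpipi, real_inner_comm cpi cstar]
      ring
    have hwstar : ⟪w, cstar⟫ = 1 - ⟪cstar, cpi⟫ ^ 2 := by
      simp only [hw, inner_sub_left, real_inner_smul_left, hss,
        real_inner_comm cpi cstar]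
      ring
    have hsq : Real.sqrt (1 - ⟪cstar, cpi⟫ ^ 2) = ‖w‖ := by
      rw [← hwn, Real.sqrt_sq (norm_nonneg _)]
    apply IsGreatest.csSup_eq
    constructor
    · by_cases hw0 : w = 0
      · obtain ⟨u, hu1, hu2⟩ := exists_unit_orth hd cpi
        refine ⟨u, hu1, le_of_eq hu2, ?_⟩
        have hc : cstar = ⟪cstar, cpi⟫ • cpi := by
          have := hw0; rw [hw, sub_eq_zero] at this; exact this
        rw [hsq, hw0, norm_zero]
        rw [hc, real_inner_smul_right, hu2, mul_zero]
      · have hwne : ‖w‖ ≠ 0 := norm_ne_zero_iff.mpr hw0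
        refine ⟨‖w‖⁻¹ • w, ?_, ?_, ?_⟩
        · simp [norm_smul, inv_mul_cancel₀ hwne]
        · rw [real_inner_smul_left, hwpi, mul_zero]
        · rw [hsq, real_inner_smul_left, hwstar, ← hwn, sq]
          field_simp
    · rintro t ⟨δ, hδ1, hδ2, rfl⟩
      have key : ⟪δ, cstar⟫ = ⟪cstar, cpi⟫ * ⟪δ, cpi⟫ + ⟪δ, w⟫ := by
        simp only [hw, inner_sub_right, real_inner_smul_right]
        ring
      have h2 : ⟪δ, w⟫ ≤ ‖w‖ := by
        calc ⟪δ, w⟫ ≤ ‖δ‖ * ‖w‖ := real_inner_le_norm δ w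
          _ = ‖w‖ := by rw [hδ1, one_mul]
      have h3 : ⟪cstar, cpi⟫ * ⟪δ, cpi⟫ ≤ 0 :=
        mul_nonpos_of_nonneg_of_nonpos hρ.le hδ2
      rw [hsq]; linarith
  · intro h
    have hρ : ⟪cstar, cpi⟫ ≤ 0 := by
      by_contra hc
      push_neg at hc
      exact absurd h (not_le.mpr (Real.arccos_lt_pi_div_two.mpr hc))
    apply IsGreatest.csSup_eq
    constructor
    · exact ⟨cstar, hstar, hρ, by rw [real_inner_self_eq_norm_sq, hstar]; norm_num⟩
    · rintro t ⟨δ, hδ1, hδ2, rfl⟩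
      calc ⟪δ, cstar⟫ ≤ ‖δ‖ * ‖cstar‖ := real_inner_le_norm _ _
        _ = 1 := by rw [hδ1, hstar, one_mul]
end

section
/- Let C ⊆ ℝ^d with C ≠ {0} and suppose the uncertainty angle α(C) = inf_{ĉ∈S^d} sup_{c∈C} θ(c,ĉ) is strictly less than π/2. Then the circumcenter (the minimizing ĉ ∈ S^d) is unique. -/
open RealInnerProductSpace Real Classical

/-- Angle between a vector `c` and a unit vector `ĉ`, with the convention `θ(0, ĉ) = 0`. -/

noncomputable def vecAngle {d : ℕ} (c chat : EuclideanSpace ℝ (Fin d)) : ℝ :=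
  if c = 0 then 0 else Real.arccos (⟪c, chat⟫ / ‖c‖)

/-!
Write `α` for the optimal worst-case angle. For `0 ≤ α ≤ π`, a unit vector `u` has worst-case
angle at most `α` iff `‖c‖ cos α ≤ ⟪c, u⟫` for every `c ∈ C`. If two distinct unit vectors
`u₁, u₂` satisfy this, then so does `m = (u₁ + u₂) / ‖u₁ + u₂‖` with `cos α` replaced by
`2 cos α / ‖u₁ + u₂‖`, which is strictly larger because `cos α > 0` and `‖u₁ + u₂‖ < 2` by strict
convexity of the norm. The worst-case angle of `m` is then strictly below `α`, contradicting
optimality. A nonzero `c ∈ C` keeps the improved constant at most `1`, so that it is a cosine.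
-/

lemma Real.arccos_le_iff_cos_le {t α : ℝ} (ht : -1 ≤ t) (hα₀ : 0 ≤ α) (hαπ : α ≤ π) :
    arccos t ≤ α ↔ cos α ≤ t := by
  constructor
  · intro h
    rcases le_or_gt t 1 with ht₁ | ht₁
    · calc cos α ≤ cos (arccos t) := cos_le_cos_of_nonneg_of_le_pi (arccos_nonneg t) hαπ h
        _ = t := cos_arccos ht ht₁
    · exact (cos_le_one α).trans ht₁.le
  · intro h
    calc arccos t ≤ arccos (cos α) := arccos_le_arccos h
      _ = α := arccos_cos hα₀ hαπ

lemma vecAngle_nonneg {d : ℕ} (c u : EuclideanSpace ℝ (Fin d)) : 0 ≤ vecAngle c u := by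
  unfold vecAngle
  split_ifs
  exacts [le_rfl, arccos_nonneg _]

lemma vecAngle_le_pi {d : ℕ} (c u : EuclideanSpace ℝ (Fin d)) : vecAngle c u ≤ π := by
  unfold vecAngle
  split_ifs
  exacts [pi_pos.le, arccos_le_pi _]

lemma vecAngle_le_iff {d : ℕ} {c u : EuclideanSpace ℝ (Fin d)} (hu : ‖u‖ ≤ 1) {α : ℝ}
    (hα₀ : 0 ≤ α) (hαπ : α ≤ π) : vecAngle c u ≤ α ↔ ‖c‖ * cos α ≤ ⟪c, u⟫ := by
  rcases eq_or_ne c 0 with rfl | hc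
  · simp [vecAngle, hα₀]
  have hc' : 0 < ‖c‖ := norm_pos_iff.mpr hc
  have hcos : -1 ≤ ⟪c, u⟫ / ‖c‖ := by
    rw [le_div_iff₀ hc', neg_one_mul]
    calc -‖c‖ ≤ -(‖c‖ * ‖u‖) := neg_le_neg (mul_le_of_le_one_right hc'.le hu)
      _ ≤ ⟪c, u⟫ := neg_le_of_abs_le (abs_real_inner_le_norm c u)
  rw [vecAngle, if_neg hc, arccos_le_iff_cos_le hcos hα₀ hαπ, le_div_iff₀ hc', mul_comm]

lemma iSup_vecAngle_le_iff {d : ℕ} {C : Set (EuclideanSpace ℝ (Fin d))} (hC : C.Nonempty)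
    {u : EuclideanSpace ℝ (Fin d)} (hu : ‖u‖ ≤ 1) {α : ℝ} (hα₀ : 0 ≤ α) (hαπ : α ≤ π) :
    (⨆ c : C, vecAngle (c : EuclideanSpace ℝ (Fin d)) u) ≤ α ↔
      ∀ c ∈ C, ‖c‖ * cos α ≤ ⟪c, u⟫ := by
  have : Nonempty C := hC.to_subtype
  have hbdd : BddAbove (Set.range fun c : C => vecAngle (c : EuclideanSpace ℝ (Fin d)) u) :=
    ⟨π, Set.forall_mem_range.mpr fun c => vecAngle_le_pi _ _⟩
  simp only [ciSup_le_iff hbdd, Subtype.forall, vecAngle_le_iff hu hα₀ hαπ]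

lemma norm_add_lt_two_of_ne {E : Type*} [NormedAddCommGroup E] [NormedSpace ℝ E]
    [StrictConvexSpace ℝ E] {u₁ u₂ : E} (h₁ : ‖u₁‖ = 1) (h₂ : ‖u₂‖ = 1) (hne : u₁ ≠ u₂) :
    ‖u₁ + u₂‖ < 2 := by
  have := norm_add_lt_of_not_sameRay fun h => hne (h.eq_of_norm_eq (h₁.trans h₂.symm))
  rwa [h₁, h₂, one_add_one_eq_two] at this

lemma exists_unit_inner_ge_of_ne {E : Type*} [NormedAddCommGroup E] [InnerProductSpace ℝ E]
    {S : Set E} {k : ℝ} (hk : 0 < k) (hS : ∃ c ∈ S, c ≠ 0) {u₁ u₂ : E}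
    (h₁ : ‖u₁‖ = 1) (h₂ : ‖u₂‖ = 1) (hne : u₁ ≠ u₂)
    (hS₁ : ∀ c ∈ S, ‖c‖ * k ≤ ⟪c, u₁⟫) (hS₂ : ∀ c ∈ S, ‖c‖ * k ≤ ⟪c, u₂⟫) :
    ∃ m : E, ‖m‖ = 1 ∧ ∃ x, k < x ∧ x ≤ 1 ∧ ∀ c ∈ S, ‖c‖ * x ≤ ⟪c, m⟫ := by
  obtain ⟨c₀, hc₀S, hc₀⟩ := hS
  have hc₀' : 0 < ‖c₀‖ := norm_pos_iff.mpr hc₀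
  set s := u₁ + u₂
  have hs : s ≠ 0 := by
    rintro hs
    have : ⟪c₀, s⟫ = 0 := by rw [hs, inner_zero_right]
    rw [inner_add_right] at this
    linarith [hS₁ c₀ hc₀S, hS₂ c₀ hc₀S, mul_pos hc₀' hk]
  have hs' : 0 < ‖s‖ := norm_pos_iff.mpr hs
  have hm₁ : ‖‖s‖⁻¹ • s‖ = 1 := by
    rw [norm_smul, norm_inv, norm_norm, inv_mul_cancel₀ hs'.ne']
  have hm : ∀ c ∈ S, ‖c‖ * (2 * k / ‖s‖) ≤ ⟪c, ‖s‖⁻¹ • s⟫ := by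
    intro c hc
    rw [real_inner_smul_right, inner_add_right, ← div_eq_inv_mul, mul_div_assoc',
      div_le_div_iff_of_pos_right hs']
    linarith [hS₁ c hc, hS₂ c hc]
  refine ⟨‖s‖⁻¹ • s, hm₁, 2 * k / ‖s‖, ?_, ?_, hm⟩
  · rw [lt_div_iff₀ hs']
    nlinarith [norm_add_lt_two_of_ne h₁ h₂ hne]
  · refine le_of_mul_le_mul_left ?_ hc₀'
    calc ‖c₀‖ * (2 * k / ‖s‖) ≤ ⟪c₀, ‖s‖⁻¹ • s⟫ := hm c₀ hc₀S
      _ ≤ ‖c₀‖ * ‖‖s‖⁻¹ • s‖ := real_inner_le_norm _ _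
      _ = ‖c₀‖ * 1 := by rw [hm₁]

/-- if the uncertainty angle of `C` is `< π/2`, the circumcenter is unique:
any two unit vectors both achieving the minimal worst-case angle coincide. -/
theorem stmt5 (d : ℕ) (C : Set (EuclideanSpace ℝ (Fin d)))
    (hne : C.Nonempty) (hC : C ≠ {0})
    (chat₁ chat₂ : EuclideanSpace ℝ (Fin d))
    (h₁ : ‖chat₁‖ = 1) (h₂ : ‖chat₂‖ = 1)
    (hopt₁ : ∀ chat' : EuclideanSpace ℝ (Fin d), ‖chat'‖ = 1 →
      (⨆ c : C, vecAngle (c : EuclideanSpace ℝ (Fin d)) chat₁) ≤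
      (⨆ c : C, vecAngle (c : EuclideanSpace ℝ (Fin d)) chat'))
    (hopt₂ : ∀ chat' : EuclideanSpace ℝ (Fin d), ‖chat'‖ = 1 →
      (⨆ c : C, vecAngle (c : EuclideanSpace ℝ (Fin d)) chat₂) ≤
      (⨆ c : C, vecAngle (c : EuclideanSpace ℝ (Fin d)) chat'))
    (hangle : (⨆ c : C, vecAngle (c : EuclideanSpace ℝ (Fin d)) chat₁) < π / 2) :
    chat₁ = chat₂ := by
  by_contra h12
  set α := ⨆ c : C, vecAngle (c : EuclideanSpace ℝ (Fin d)) chat₁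
  have hα₀ : 0 ≤ α := Real.iSup_nonneg fun c => vecAngle_nonneg _ _
  have hαπ : α ≤ π := by linarith [pi_pos]
  have hcos : 0 < cos α := cos_pos_of_mem_Ioo ⟨by linarith [pi_pos], hangle⟩
  have hC₀ : ∃ c ∈ C, c ≠ 0 := by
    by_contra! h
    exact hC (Set.eq_singleton_iff_nonempty_unique_mem.mpr ⟨hne, h⟩)
  obtain ⟨m, hm, x, hαx, hx₁, hmx⟩ := exists_unit_inner_ge_of_ne hcos hC₀ h₁ h₂ h12
    ((iSup_vecAngle_le_iff hne h₁.le hα₀ hαπ).mp le_rfl)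
    ((iSup_vecAngle_le_iff hne h₂.le hα₀ hαπ).mp (hopt₂ chat₁ h₁))
  have hx₀ : -1 ≤ x := by linarith [neg_one_le_cos α]
  have hβα : arccos x < α := by
    calc arccos x < arccos (cos α) := arccos_lt_arccos (neg_one_le_cos α) hαx hx₁
      _ = α := arccos_cos hα₀ hαπ
  have hβ : (⨆ c : C, vecAngle (c : EuclideanSpace ℝ (Fin d)) m) ≤ arccos x := by
    rw [iSup_vecAngle_le_iff hne hm.le (arccos_nonneg x) (arccos_le_pi x), cos_arccos hx₀ hx₁]
    exact hmx
  exact (hopt₁ m hm).trans hβ |>.not_gt hβα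
end

section
/- Let K ⊆ ℝ^p (p ≥ 2) be a simplicial cone K = { Σ_{i=1}^p α_i g_i : α_i ≥ 0 } where g₁,...,g_p are linearly independent unit vectors, and let G be the matrix with columns g_i. Then the inradius ρ(K) = max_{x ∈ K, ‖x‖=1} min_{y ∈ ∂K} ‖x - y‖ satisfies ρ(K) ≥ (1/√p) √(λ_min(G'G)/λ_max(G'G)). -/
/-!
Change variables by `G`: the cone is the image of the nonnegative orthant. Since
`λ_min ‖δ‖² ≤ ‖G δ‖²`, the preimage under `G` of the ball of radius `√λ_min · ε` around `G α`
lies in the cube of half-side `ε` around `α`, hence in the open orthant as soon as `α ≥ ε`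
coordinatewise. Taking `α = ε 𝟙` with `ε = 1 / ‖G 𝟙‖` makes `G α` a unit vector of the cone, and
`‖G 𝟙‖² ≤ λ_max ‖𝟙‖² = p λ_max` gives the bound.
-/

open Matrix Real

/-- The simplicial cone generated by the columns of `G`. -/
def simplicialCone (p : ℕ) (G : Matrix (Fin p) (Fin p) ℝ) :
    Set (EuclideanSpace ℝ (Fin p)) :=
  {x | ∃ α : Fin p → ℝ, (∀ i, 0 ≤ α i) ∧ ∀ j, x j = ∑ i, α i * G j i}

theorem EuclideanSpace.sq_norm_eq_dotProduct {n : Type*} [Fintype n] (x : EuclideanSpace ℝ n) :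
    ‖x‖ ^ 2 = x.ofLp ⬝ᵥ x.ofLp := by
  rw [EuclideanSpace.real_norm_sq_eq]
  simp [dotProduct, sq]

section Rayleigh

open scoped MatrixOrder

variable {m n : Type*} [Fintype m] [Fintype n] [DecidableEq n]

theorem Matrix.IsHermitian.iInf_eigenvalues_mul_le_dotProduct_mulVec {A : Matrix n n ℝ}
    (hA : A.IsHermitian) (v : n → ℝ) :
    (⨅ i, hA.eigenvalues i) * (v ⬝ᵥ v) ≤ v ⬝ᵥ A *ᵥ v := by
  have hle : algebraMap ℝ _ (⨅ i, hA.eigenvalues i) ≤ A := by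
    refine algebraMap_le_of_le_spectrum ?_ hA
    rw [hA.spectrum_real_eq_range_eigenvalues]
    rintro _ ⟨i, rfl⟩
    exact ciInf_le (Set.finite_range _).bddBelow i
  have := (Matrix.le_iff.mp hle).dotProduct_mulVec_nonneg v
  simp only [star_trivial, Algebra.algebraMap_eq_smul_one, sub_mulVec, smul_mulVec, one_mulVec,
    dotProduct_sub, dotProduct_smul, smul_eq_mul] at this
  linarith

theorem Matrix.IsHermitian.dotProduct_mulVec_le_iSup_eigenvalues_mul {A : Matrix n n ℝ}
    (hA : A.IsHermitian) (v : n → ℝ) :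
    v ⬝ᵥ A *ᵥ v ≤ (⨆ i, hA.eigenvalues i) * (v ⬝ᵥ v) := by
  have hle : A ≤ algebraMap ℝ _ (⨆ i, hA.eigenvalues i) := by
    refine le_algebraMap_of_spectrum_le ?_ hA
    rw [hA.spectrum_real_eq_range_eigenvalues]
    rintro _ ⟨i, rfl⟩
    exact le_ciSup (Set.finite_range _).bddAbove i
  have := (Matrix.le_iff.mp hle).dotProduct_mulVec_nonneg v
  simp only [star_trivial, Algebra.algebraMap_eq_smul_one, sub_mulVec, smul_mulVec, one_mulVec,
    dotProduct_sub, dotProduct_smul, smul_eq_mul] at this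
  linarith

omit [DecidableEq n] in
theorem Matrix.dotProduct_mulVec_conjTranspose_mul_self (G : Matrix m n ℝ) (v : n → ℝ) :
    v ⬝ᵥ (Gᴴ * G) *ᵥ v = (G *ᵥ v) ⬝ᵥ (G *ᵥ v) := by
  rw [← mulVec_mulVec, dotProduct_mulVec, conjTranspose_eq_transpose_of_trivial, vecMul_transpose]

theorem Matrix.iInf_eigenvalues_conjTranspose_mul_self_mul_le (G : Matrix m n ℝ) (v : n → ℝ) :
    (⨅ i, (isHermitian_conjTranspose_mul_self G).eigenvalues i) * (v ⬝ᵥ v) ≤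
      (G *ᵥ v) ⬝ᵥ (G *ᵥ v) :=
  dotProduct_mulVec_conjTranspose_mul_self G v ▸
    (isHermitian_conjTranspose_mul_self G).iInf_eigenvalues_mul_le_dotProduct_mulVec v

theorem Matrix.le_iSup_eigenvalues_conjTranspose_mul_self_mul (G : Matrix m n ℝ) (v : n → ℝ) :
    (G *ᵥ v) ⬝ᵥ (G *ᵥ v) ≤
      (⨆ i, (isHermitian_conjTranspose_mul_self G).eigenvalues i) * (v ⬝ᵥ v) :=
  dotProduct_mulVec_conjTranspose_mul_self G v ▸
    (isHermitian_conjTranspose_mul_self G).dotProduct_mulVec_le_iSup_eigenvalues_mul v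

theorem Matrix.sq_norm_mulVec_one_le (G : Matrix m n ℝ) :
    ‖WithLp.toLp 2 (G *ᵥ 1)‖ ^ 2 ≤
      Fintype.card n * ⨆ i, (isHermitian_conjTranspose_mul_self G).eigenvalues i := by
  rw [EuclideanSpace.sq_norm_eq_dotProduct, mul_comm]
  simpa using le_iSup_eigenvalues_conjTranspose_mul_self_mul G 1

end Rayleigh

theorem Matrix.norm_mulVec_one_pos {n : Type*} [Fintype n] [DecidableEq n] [Nonempty n]
    {G : Matrix n n ℝ} (hG : IsUnit G.det) : 0 < ‖WithLp.toLp 2 (G *ᵥ 1)‖ := by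
  refine norm_pos_iff.mpr fun h => one_ne_zero (congrFun (?_ : (1 : n → ℝ) = 0)
    (Classical.arbitrary _))
  rw [← one_mulVec 1, ← nonsing_inv_mul G hG, ← mulVec_mulVec, ← WithLp.ofLp_toLp 2 (G *ᵥ 1), h]
  simp

section Inradius

variable {E : Type*} [NormedAddCommGroup E]

noncomputable def inradius (K : Set E) : ℝ :=
  sSup {r : ℝ | ∃ x : E, x ∈ K ∧ ‖x‖ = 1 ∧ r = Metric.infDist x (frontier K)}

theorem le_infDist_frontier_of_ball_subset_interior {K : Set E} {x : E} {r : ℝ}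
    (hK : (frontier K).Nonempty) (h : Metric.ball x r ⊆ interior K) :
    r ≤ Metric.infDist x (frontier K) :=
  (Metric.le_infDist hK).mpr fun _ hz => not_lt.mp fun hr => hz.2 (h (Metric.mem_ball'.mpr hr))

theorem infDist_frontier_le_inradius {K : Set E} {x : E} (hK : (frontier K).Nonempty)
    (hx : x ∈ K) (hx1 : ‖x‖ = 1) : Metric.infDist x (frontier K) ≤ inradius K := by
  obtain ⟨z, hz⟩ := hK
  refine le_csSup ⟨1 + ‖z‖, ?_⟩ ⟨x, hx, hx1, rfl⟩
  rintro _ ⟨y, -, hy, rfl⟩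
  calc Metric.infDist y (frontier K) ≤ dist y z := Metric.infDist_le_dist_of_mem hz
    _ ≤ 1 + ‖z‖ := hy ▸ dist_le_norm_add_norm y z

end Inradius

namespace simplicialCone

variable {p : ℕ} {G : Matrix (Fin p) (Fin p) ℝ}

theorem mem_iff (hG : IsUnit G.det) {x : EuclideanSpace ℝ (Fin p)} :
    x ∈ simplicialCone p G ↔ ∀ i, 0 ≤ (G⁻¹ *ᵥ x.ofLp) i := by
  have hx : ∀ α : Fin p → ℝ, (∀ j, x j = ∑ i, α i * G j i) ↔ x.ofLp = G *ᵥ α := fun α => by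
    simp only [funext_iff, mulVec, dotProduct, mul_comm]
  constructor
  · rintro ⟨α, hα, hxα⟩
    rwa [(hx α).mp hxα, mulVec_mulVec, nonsing_inv_mul G hG, one_mulVec]
  · intro h
    refine ⟨G⁻¹ *ᵥ x.ofLp, h, (hx _).mpr ?_⟩
    rw [mulVec_mulVec, mul_nonsing_inv G hG, one_mulVec]

theorem setOf_pos_subset_interior (hG : IsUnit G.det) :
    {x : EuclideanSpace ℝ (Fin p) | ∀ i, 0 < (G⁻¹ *ᵥ x.ofLp) i} ⊆
      interior (simplicialCone p G) := by
  refine interior_maximal (fun x hx => (mem_iff hG).mpr fun i => (hx i).le) ?_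
  rw [Set.ofPred_forall]
  exact isOpen_iInter_of_finite fun i => isOpen_lt continuous_const (by fun_prop)

theorem frontier_nonempty [Nonempty (Fin p)] (hG : IsUnit G.det) :
    (frontier (simplicialCone p G)).Nonempty := by
  refine nonempty_frontier_iff.mpr ⟨⟨0, 0, fun _ => le_rfl, fun j => by simp⟩, fun h => ?_⟩
  have := (mem_iff hG (x := WithLp.toLp 2 (G *ᵥ -1))).mp (h ▸ Set.mem_univ _)
    (Classical.arbitrary _)
  simp only [mulVec_mulVec, nonsing_inv_mul G hG, one_mulVec, Pi.neg_apply, Pi.one_apply,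
    Left.nonneg_neg_iff] at this
  linarith

theorem ball_subset_interior (hG : IsUnit G.det) {α : Fin p → ℝ} {ε : ℝ} (hα : ∀ i, ε ≤ α i) :
    Metric.ball (WithLp.toLp 2 (G *ᵥ α))
        (√(⨅ i, (isHermitian_conjTranspose_mul_self G).eigenvalues i) * ε) ⊆
      interior (simplicialCone p G) := by
  set lo := ⨅ i, (isHermitian_conjTranspose_mul_self G).eigenvalues i
  have hlo : 0 ≤ lo := Real.iInf_nonneg (eigenvalues_conjTranspose_mul_self_nonneg G)
  intro z hz
  have hz' := Metric.mem_ball.mp hz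
  refine setOf_pos_subset_interior hG fun i => ?_
  set δ := G⁻¹ *ᵥ z.ofLp - α
  have hGδ : G *ᵥ δ = (z - WithLp.toLp 2 (G *ᵥ α)).ofLp := by
    simp only [δ, mulVec_sub, mulVec_mulVec, mul_nonsing_inv G hG, one_mulVec, WithLp.ofLp_sub]
  have hδ : lo * δ i ^ 2 < lo * ε ^ 2 := calc
    lo * δ i ^ 2 ≤ lo * (δ ⬝ᵥ δ) := by
      gcongr
      simpa only [dotProduct, ← sq] using
        Finset.single_le_sum (fun j _ => sq_nonneg (δ j)) (Finset.mem_univ i)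
    _ ≤ (G *ᵥ δ) ⬝ᵥ (G *ᵥ δ) := iInf_eigenvalues_conjTranspose_mul_self_mul_le G δ
    _ = dist z (WithLp.toLp 2 (G *ᵥ α)) ^ 2 := by
      rw [hGδ, ← EuclideanSpace.sq_norm_eq_dotProduct, dist_eq_norm]
    _ < (√lo * ε) ^ 2 := by gcongr
    _ = lo * ε ^ 2 := by rw [mul_pow, sq_sqrt hlo]
  have hε : 0 ≤ ε := (pos_of_mul_pos_right (dist_nonneg.trans_lt hz') (sqrt_nonneg _)).le
  have hδε := abs_lt.mp (abs_lt_of_sq_lt_sq (lt_of_mul_lt_mul_left hδ hlo) hε)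
  have : (G⁻¹ *ᵥ z.ofLp) i = α i + δ i := by simp [δ]
  linarith [hα i]

end simplicialCone

theorem stmt14_general (p : ℕ) (hp : 2 ≤ p) (G : Matrix (Fin p) (Fin p) ℝ)
    (hdet : IsUnit G.det) :
    (1 / Real.sqrt p) *
      Real.sqrt ((⨅ i, (Matrix.isHermitian_conjTranspose_mul_self G).eigenvalues i) /
        (⨆ i, (Matrix.isHermitian_conjTranspose_mul_self G).eigenvalues i)) ≤
    sSup {r : ℝ | ∃ x : EuclideanSpace ℝ (Fin p), x ∈ simplicialCone p G ∧ ‖x‖ = 1 ∧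
      r = Metric.infDist x (frontier (simplicialCone p G))} := by
  have : Nonempty (Fin p) := ⟨⟨0, by omega⟩⟩
  set lo := ⨅ i, (isHermitian_conjTranspose_mul_self G).eigenvalues i
  set hi := ⨆ i, (isHermitian_conjTranspose_mul_self G).eigenvalues i
  set c := ‖WithLp.toLp 2 (G *ᵥ 1)‖
  have hc : 0 < c := norm_mulVec_one_pos hdet
  set x₀ : EuclideanSpace ℝ (Fin p) := WithLp.toLp 2 (G *ᵥ c⁻¹ • 1)
  have hx₀K : x₀ ∈ simplicialCone p G := (simplicialCone.mem_iff hdet).mpr fun i => by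
    simp [x₀, mulVec_mulVec, nonsing_inv_mul G hdet, hc.le]
  have hx₀1 : ‖x₀‖ = 1 := by
    rw [show x₀ = c⁻¹ • WithLp.toLp 2 (G *ᵥ 1) by simp [x₀, mulVec_smul], norm_smul, norm_inv,
      norm_norm, inv_mul_cancel₀ hc.ne']
  have hfront := simplicialCone.frontier_nonempty hdet
  calc 1 / √p * √(lo / hi) = √lo / √(p * hi) := by
        rw [sqrt_div' _ (Real.iSup_nonneg (eigenvalues_conjTranspose_mul_self_nonneg G)),
          sqrt_mul (Nat.cast_nonneg _), div_mul_div_comm, one_mul]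
    _ ≤ √lo * c⁻¹ := by
        rw [← div_eq_mul_inv]
        refine div_le_div_of_nonneg_left (sqrt_nonneg _) hc (le_sqrt_of_sq_le ?_)
        simpa only [Fintype.card_fin] using sq_norm_mulVec_one_le G
    _ ≤ Metric.infDist x₀ (frontier (simplicialCone p G)) :=
        le_infDist_frontier_of_ball_subset_interior hfront
          (simplicialCone.ball_subset_interior hdet (α := c⁻¹ • 1) (ε := c⁻¹) (by simp))
    _ ≤ inradius (simplicialCone p G) := infDist_frontier_le_inradius hfront hx₀K hx₀1

/-- for a simplicial cone `K` generated by linearly independent unit vectors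
(the columns of the invertible matrix `G`), the inradius
`ρ(K) = max_{x ∈ K, ‖x‖=1} min_{y ∈ ∂K} ‖x-y‖` satisfies
`ρ(K) ≥ (1/√p) √(λ_min(G'G)/λ_max(G'G))`. -/
theorem stmt14 (p : ℕ) (hp : 2 ≤ p) (G : Matrix (Fin p) (Fin p) ℝ)
    (hunit : ∀ i, ∑ j, (G j i) ^ 2 = 1) (hdet : IsUnit G.det) :
    (1 / Real.sqrt p) *
      Real.sqrt ((⨅ i, (Matrix.isHermitian_conjTranspose_mul_self G).eigenvalues i) /
        (⨆ i, (Matrix.isHermitian_conjTranspose_mul_self G).eigenvalues i)) ≤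
    sSup {r : ℝ | ∃ x : EuclideanSpace ℝ (Fin p), x ∈ simplicialCone p G ∧ ‖x‖ = 1 ∧
      r = Metric.infDist x (frontier (simplicialCone p G))} :=
  stmt14_general p hp G hdet
end

section
/- Let p ≥ 2 and let G ∈ ℝ^{p×p} be a full-rank matrix whose columns g₁,...,g_p all have unit norm. Let φ = min_{i} ‖g_i - Π_{g_{-i}}(g_i)‖, where Π_{g_{-i}} is the orthogonal projection onto the span of the columns other than g_i, and assume φ > 0. Then λ_max(G'G)/λ_min(G'G) ≤ (p/φ)². -/
/-!
The eigenvalues of `G'G` are the values `‖G v‖²` at its unit eigenvectors `v`. They are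
nonnegative and sum to `tr (G'G) = ∑ ‖gᵢ‖² = p`, so each is at most `p`. Conversely, a unit `v`
has a coordinate with `vᵢ² ≥ 1/p`, and `G v = ∑ vⱼ gⱼ` is at least `|vᵢ|` times the distance from
`gᵢ` to the span of the other columns, which is at least `φ`; so every eigenvalue is at least
`φ²/p`, and the condition number is at most `p / (φ²/p)`.
-/

open Matrix Real

theorem EuclideanSpace.exists_norm_sq_div_card_le_sq {ι : Type*} [Fintype ι] [Nonempty ι]
    (v : EuclideanSpace ℝ ι) : ∃ i, ‖v‖ ^ 2 / Fintype.card ι ≤ v i ^ 2 := by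
  have hsum : ∑ _i : ι, ‖v‖ ^ 2 / Fintype.card ι ≤ ∑ i, v i ^ 2 := by
    rw [Finset.sum_const, Finset.card_univ, nsmul_eq_mul, mul_div_cancel₀ _ (by positivity),
      EuclideanSpace.real_norm_sq_eq]
  obtain ⟨i, -, hi⟩ := Finset.exists_le_of_sum_le Finset.univ_nonempty hsum
  exact ⟨i, hi⟩

section Residual

variable {E : Type*} [NormedAddCommGroup E] [InnerProductSpace ℝ E]

theorem Submodule.abs_mul_norm_sub_starProjection_le (K : Submodule ℝ E) [K.HasOrthogonalProjection]
    (a : ℝ) (x : E) {y : E} (hy : y ∈ K) :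
    |a| * ‖x - K.starProjection x‖ ≤ ‖a • x + y‖ := by
  rcases eq_or_ne a 0 with rfl | ha
  · simp
  have hmem : -a⁻¹ • y ∈ K := K.smul_mem _ hy
  calc |a| * ‖x - K.starProjection x‖
      ≤ |a| * ‖x - -a⁻¹ • y‖ := by
        gcongr
        rw [K.starProjection_minimal]
        exact ciInf_le ⟨0, Set.forall_mem_range.2 fun _ => norm_nonneg _⟩ (⟨_, hmem⟩ : K)
    _ = ‖a • x + y‖ := by
        rw [← Real.norm_eq_abs, ← norm_smul, smul_sub, smul_smul, mul_neg, mul_inv_cancel₀ ha,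
          neg_smul, one_smul, sub_neg_eq_add]

theorem abs_mul_norm_sub_starProjection_le_norm_sum {ι : Type*} [Fintype ι]
    (g : ι → E) (c : ι → ℝ) (i : ι) (K : Submodule ℝ E) [K.HasOrthogonalProjection]
    (hK : ∀ j ≠ i, g j ∈ K) :
    |c i| * ‖g i - K.starProjection (g i)‖ ≤ ‖∑ j, c j • g j‖ := by
  classical
  rw [← Finset.add_sum_erase _ _ (Finset.mem_univ i)]
  refine K.abs_mul_norm_sub_starProjection_le _ _ (K.sum_mem fun j hj => K.smul_mem _ ?_)
  exact hK j (Finset.ne_of_mem_erase hj)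

theorem sq_div_card_le_norm_sum_smul_sq [FiniteDimensional ℝ E] {ι : Type*} [Fintype ι]
    [Nonempty ι] (g : ι → E) {φ : ℝ} (hφ : 0 ≤ φ)
    (hres : ∀ i, φ ≤ ‖g i - (Submodule.span ℝ (g '' {j | j ≠ i})).starProjection (g i)‖)
    (v : EuclideanSpace ℝ ι) (hv : ‖v‖ = 1) :
    φ ^ 2 / Fintype.card ι ≤ ‖∑ j, v j • g j‖ ^ 2 := by
  obtain ⟨i, hi⟩ := v.exists_norm_sq_div_card_le_sq
  rw [hv, one_pow] at hi
  have hcomb : |v i| * φ ≤ ‖∑ j, v j • g j‖ :=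
    (mul_le_mul_of_nonneg_left (hres i) (abs_nonneg _)).trans
      (abs_mul_norm_sub_starProjection_le_norm_sum g v i _
        fun j hj => Submodule.subset_span ⟨j, hj, rfl⟩)
  calc φ ^ 2 / Fintype.card ι = 1 / Fintype.card ι * φ ^ 2 := by ring
    _ ≤ v i ^ 2 * φ ^ 2 := by gcongr
    _ = (|v i| * φ) ^ 2 := by rw [mul_pow, sq_abs]
    _ ≤ ‖∑ j, v j • g j‖ ^ 2 := by gcongr

end Residual

theorem Matrix.toLp_mulVec_eq_sum_smul_col {m n : Type*} [Fintype n] (G : Matrix m n ℝ)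
    (g : n → EuclideanSpace ℝ m) (hg : ∀ i j, g i j = G j i) (v : n → ℝ) :
    WithLp.toLp 2 (G *ᵥ v) = ∑ j, v j • g j := by
  ext i
  simp [mulVec, dotProduct, hg, mul_comm]

theorem Matrix.trace_transpose_mul_self_eq_sum_norm_sq_col {m n : Type*} [Fintype m] [Fintype n]
    (G : Matrix m n ℝ) (g : n → EuclideanSpace ℝ m) (hg : ∀ i j, g i j = G j i) :
    (Gᵀ * G).trace = ∑ j, ‖g j‖ ^ 2 := by
  simp_rw [EuclideanSpace.real_norm_sq_eq, hg]
  simp only [trace, diag, mul_apply, transpose_apply, sq]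

theorem Matrix.IsHermitian.eigenvalues_transpose_mul_self_eq_norm_sq {m n : Type*} [Fintype m]
    [Fintype n] [DecidableEq n] (G : Matrix m n ℝ) (hA : (Gᵀ * G).IsHermitian) (k : n) :
    hA.eigenvalues k = ‖WithLp.toLp 2 (G *ᵥ hA.eigenvectorBasis k)‖ ^ 2 := by
  rw [hA.eigenvalues_eq, ← mulVec_mulVec, dotProduct_mulVec, vecMul_transpose,
    EuclideanSpace.real_norm_sq_eq]
  simp [dotProduct, sq]

theorem Matrix.IsHermitian.eigenvalues_le_trace {n : Type*} [Fintype n] [DecidableEq n]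
    {A : Matrix n n ℝ} (hA : A.IsHermitian) (hnonneg : ∀ j, 0 ≤ hA.eigenvalues j) (i : n) :
    hA.eigenvalues i ≤ A.trace := by
  rw [hA.trace_eq_sum_eigenvalues]
  exact Finset.single_le_sum (fun j _ => hnonneg j) (Finset.mem_univ i)

theorem stmt16_general (p : ℕ) (hp : 2 ≤ p) (G : Matrix (Fin p) (Fin p) ℝ)
    (g : Fin p → EuclideanSpace ℝ (Fin p)) (hg : ∀ i j, g i j = G j i)
    (hunit : ∀ i, ‖g i‖ = 1)
    (φ : ℝ)
    (hφdef : φ = ⨅ i, ‖g i - (Submodule.orthogonalProjectionOnto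
      (Submodule.span ℝ (g '' {j | j ≠ i})) (g i) : EuclideanSpace ℝ (Fin p))‖)
    (hφ : 0 < φ) :
    (⨆ i, (Matrix.isHermitian_iff_isSymm.mpr (Matrix.isSymm_transpose_mul_self G)).eigenvalues i) /
      (⨅ i, (Matrix.isHermitian_iff_isSymm.mpr (Matrix.isSymm_transpose_mul_self G)).eigenvalues i) ≤
      ((p : ℝ) / φ) ^ 2 := by
  set hA := Matrix.isHermitian_iff_isSymm.mpr (Matrix.isSymm_transpose_mul_self G)
  have : Nonempty (Fin p) := ⟨⟨0, by omega⟩⟩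
  have hp0 : (0 : ℝ) < p := by positivity
  have heig : ∀ k, hA.eigenvalues k = ‖∑ j, (hA.eigenvectorBasis k) j • g j‖ ^ 2 := fun k => by
    rw [hA.eigenvalues_transpose_mul_self_eq_norm_sq G, G.toLp_mulVec_eq_sum_smul_col g hg]
  have hupper : ∀ k, hA.eigenvalues k ≤ p := fun k => by
    have := hA.eigenvalues_le_trace (fun j => (heig j).ge.trans' (sq_nonneg _)) k
    simpa [G.trace_transpose_mul_self_eq_sum_norm_sq_col g hg, hunit] using this
  have hlower : ∀ k, φ ^ 2 / p ≤ hA.eigenvalues k := fun k => by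
    have hres : ∀ i, φ ≤ ‖g i - (Submodule.span ℝ (g '' {j | j ≠ i})).starProjection (g i)‖ :=
      fun i => hφdef ▸ ciInf_le (Finite.bddBelow_range _) i
    simpa [heig k] using sq_div_card_le_norm_sum_smul_sq g hφ.le hres _
      (hA.eigenvectorBasis.orthonormal.1 k)
  calc (⨆ k, hA.eigenvalues k) / (⨅ k, hA.eigenvalues k)
      ≤ p / (φ ^ 2 / p) := div_le_div₀ hp0.le (ciSup_le hupper) (by positivity) (le_ciInf hlower)
    _ = ((p : ℝ) / φ) ^ 2 := by field_simp

/-- for a full-rank matrix `G` with unit-norm columns `gᵢ`, letting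
`φ = minᵢ ‖gᵢ - Π_{g₋ᵢ}(gᵢ)‖ > 0` (the minimal leave-one-out residual norm), the condition
number of the Gram matrix satisfies `λ_max(G'G)/λ_min(G'G) ≤ (p/φ)²`. -/
theorem stmt16 (p : ℕ) (hp : 2 ≤ p) (G : Matrix (Fin p) (Fin p) ℝ)
    (g : Fin p → EuclideanSpace ℝ (Fin p)) (hg : ∀ i j, g i j = G j i)
    (hunit : ∀ i, ‖g i‖ = 1) (hdet : IsUnit G.det)
    (φ : ℝ)
    (hφdef : φ = ⨅ i, ‖g i - (Submodule.orthogonalProjectionOnto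
      (Submodule.span ℝ (g '' {j | j ≠ i})) (g i) : EuclideanSpace ℝ (Fin p))‖)
    (hφ : 0 < φ) :
    (⨆ i, (Matrix.isHermitian_iff_isSymm.mpr (Matrix.isSymm_transpose_mul_self G)).eigenvalues i) /
      (⨅ i, (Matrix.isHermitian_iff_isSymm.mpr (Matrix.isSymm_transpose_mul_self G)).eigenvalues i) ≤
      ((p : ℝ) / φ) ^ 2 :=
  stmt16_general p hp G g hg hunit φ hφdef hφ
end

section
/- Let g₁,...,g_p ∈ ℝ^p be unit vectors such that for every i = 2,...,p, ‖g_i - Π_{g₁,...,g_{i-1}}(g_i)‖² ≥ η² for some η ∈ (0,1). Then for every i = 1,...,p, ‖g_i - Π_{g_{-i}}(g_i)‖² ≥ η^{2(p-i)} · (η²)^{𝟙{i>1}}, where Π_{g_{-i}} projects onto the span of {g₁,...,g_p} \ {g_i}. In particular, ‖g₁ - Π_{g_{-1}}(g₁)‖² ≥ η^{2(p-1)}. -/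
/-!
Write `r(x; K) = x - Π_K x`. For a subspace `T` and vectors `x, v`, both
`‖r(v; T ⊔ ℝx)‖² ‖r(x; T)‖²` and `‖r(x; T ⊔ ℝv)‖² ‖r(v; T)‖²` equal the Gram determinant of
`r(x; T)` and `r(v; T)`, because `r(x; T ⊔ ℝv)` is the residual of `r(x; T)` against `r(v; T)`
(Frisch–Waugh–Lovell). As `‖r(v; T)‖ ≤ ‖v‖ ≤ 1`, this gives
`‖r(x; T ⊔ ℝv)‖² ≥ ‖r(v; T ⊔ ℝx)‖² ‖r(x; T)‖²`.
Fix `i` and add `g_k`, `k = i+1, …, p-1`, one at a time to `span {g_j : j < k, j ≠ i}`: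
with `x = g_i`, `v = g_k` the factor `‖r(v; T ⊔ ℝx)‖²` is the residual of `g_k` against all
earlier vectors, at least `η²` by hypothesis. The starting value `‖r(g_i; span {g_j : j < i})‖²`
is at least `η²` for `i > 0` and equals `‖g_0‖² = 1` for `i = 0`.
-/

open Submodule

variable {E : Type*} [NormedAddCommGroup E] [InnerProductSpace ℝ E]

lemma norm_sub_starProjection_span_singleton_sq_mul (a b : E) :
    ‖a - (ℝ ∙ b).starProjection a‖ ^ 2 * ‖b‖ ^ 2 = ‖a‖ ^ 2 * ‖b‖ ^ 2 - inner ℝ a b ^ 2 := by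
  rcases eq_or_ne b 0 with rfl | hb
  · simp
  have hb' : ‖b‖ ≠ 0 := norm_ne_zero_iff.2 hb
  rw [starProjection_singleton, norm_sub_sq_real, real_inner_smul_right, norm_smul,
    Real.norm_eq_abs, mul_pow, sq_abs, real_inner_comm, RCLike.ofReal_real_eq_id, id]
  field_simp
  ring

lemma sub_starProjection_sup_span_singleton (T : Submodule ℝ E) [FiniteDimensional ℝ T]
    (x v : E) :
    x - (T ⊔ ℝ ∙ v).starProjection x =
      (x - T.starProjection x) -
        (ℝ ∙ (v - T.starProjection v)).starProjection (x - T.starProjection x) := by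
  set a := x - T.starProjection x
  set b := v - T.starProjection v
  set r := a - (ℝ ∙ b).starProjection a
  have hbT : b ∈ Tᗮ := T.sub_starProjection_mem_orthogonal v
  have hrT : r ∈ Tᗮ := sub_mem (T.sub_starProjection_mem_orthogonal x)
    (span_singleton_le_iff_mem _ _ |>.2 hbT (starProjection_apply_mem _ a))
  have hrb : inner ℝ b r = 0 :=
    mem_orthogonal_singleton_iff_inner_right.1 ((ℝ ∙ b).sub_starProjection_mem_orthogonal a)
  have hb : b ∈ T ⊔ ℝ ∙ v :=
    sub_mem (mem_sup_right (mem_span_singleton_self v))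
      (mem_sup_left (starProjection_apply_mem T v))
  suffices (T ⊔ ℝ ∙ v).starProjection x = T.starProjection x + (ℝ ∙ b).starProjection a by
    rw [this, sub_add_eq_sub_sub]
  refine eq_starProjection_of_mem_orthogonal
    (add_mem (mem_sup_left (starProjection_apply_mem T x))
      (span_singleton_le_iff_mem _ _ |>.2 hb (starProjection_apply_mem _ a))) ?_
  rw [sub_add_eq_sub_sub, ← inf_orthogonal]
  refine ⟨hrT, mem_orthogonal_singleton_iff_inner_right.2 ?_⟩
  rw [show v = b + T.starProjection v by simp only [b]; abel, inner_add_left, hrb,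
    inner_right_of_mem_orthogonal (starProjection_apply_mem T v) hrT, add_zero]

lemma norm_sub_starProjection_le (K : Submodule ℝ E) [K.HasOrthogonalProjection] (v : E) :
    ‖v - K.starProjection v‖ ≤ ‖v‖ := by
  simpa using Kᗮ.norm_starProjection_apply_le v

lemma norm_sub_starProjection_sup_sq_mul_comm (T : Submodule ℝ E) [FiniteDimensional ℝ T]
    (x v : E) :
    ‖v - (T ⊔ ℝ ∙ x).starProjection v‖ ^ 2 * ‖x - T.starProjection x‖ ^ 2 =
      ‖x - (T ⊔ ℝ ∙ v).starProjection x‖ ^ 2 * ‖v - T.starProjection v‖ ^ 2 := by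
  rw [sub_starProjection_sup_span_singleton, sub_starProjection_sup_span_singleton,
    norm_sub_starProjection_span_singleton_sq_mul, norm_sub_starProjection_span_singleton_sq_mul,
    real_inner_comm]
  ring

lemma mul_norm_sub_starProjection_sup_sq_le (T : Submodule ℝ E) [FiniteDimensional ℝ T]
    {v : E} (hv : ‖v‖ ≤ 1) (x : E) :
    ‖v - (T ⊔ ℝ ∙ x).starProjection v‖ ^ 2 * ‖x - T.starProjection x‖ ^ 2 ≤
      ‖x - (T ⊔ ℝ ∙ v).starProjection x‖ ^ 2 := by
  rw [norm_sub_starProjection_sup_sq_mul_comm]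
  exact mul_le_of_le_one_right (sq_nonneg _)
    (pow_le_one₀ (norm_nonneg _) ((norm_sub_starProjection_le T v).trans hv))

section LeaveOneOut

variable [FiniteDimensional ℝ E] {p : ℕ} {g : Fin p → E}

lemma pow_mul_le_norm_sub_starProjection_span_lt_ne (hg : ∀ j, ‖g j‖ ≤ 1) {c : ℝ} (hc : 0 ≤ c)
    {i : Fin p}
    (hseq : ∀ j, i < j → c ≤ ‖g j - (span ℝ (g '' Set.Iio j)).starProjection (g j)‖ ^ 2)
    {k : ℕ} (hik : (i : ℕ) + 1 ≤ k) (hkp : k ≤ p) :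
    c ^ (k - 1 - i) * ‖g i - (span ℝ (g '' Set.Iio i)).starProjection (g i)‖ ^ 2 ≤
      ‖g i - (span ℝ (g '' {j | (j : ℕ) < k ∧ j ≠ i})).starProjection (g i)‖ ^ 2 := by
  induction k, hik using Nat.le_induction with
  | base =>
    have hIio : {j : Fin p | (j : ℕ) < i + 1 ∧ j ≠ i} = Set.Iio i := by
      ext j; simp only [Set.mem_ofPred_eq, Set.mem_Iio, Fin.lt_def, ne_eq, Fin.ext_iff]; omega
    rw [hIio]
    simp
  | succ k hik ih =>
    have hsucc : span ℝ (g '' {j | (j : ℕ) < k + 1 ∧ j ≠ i}) =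
        span ℝ (g '' {j | (j : ℕ) < k ∧ j ≠ i}) ⊔ ℝ ∙ g ⟨k, hkp⟩ := by
      rw [← Set.image_singleton, ← span_union, ← Set.image_union]
      congr 2; ext j
      simp only [Set.mem_ofPred_eq, Set.mem_union, Set.mem_singleton_iff, ne_eq, Fin.ext_iff]
      omega
    have hprev : span ℝ (g '' {j | (j : ℕ) < k ∧ j ≠ i}) ⊔ ℝ ∙ g i =
        span ℝ (g '' Set.Iio ⟨k, hkp⟩) := by
      rw [← Set.image_singleton, ← span_union, ← Set.image_union]
      congr 2; ext j
      simp only [Set.mem_ofPred_eq, Set.mem_union, Set.mem_singleton_iff, Set.mem_Iio, Fin.lt_def,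
        ne_eq, Fin.ext_iff]
      omega
    have hstep := mul_norm_sub_starProjection_sup_sq_le
      (span ℝ (g '' {j | (j : ℕ) < k ∧ j ≠ i})) (hg ⟨k, hkp⟩) (g i)
    simp only [hprev] at hstep
    simp only [hsucc]
    rw [show k + 1 - 1 - i = (k - 1 - i) + 1 by omega, pow_succ', mul_assoc]
    refine le_trans ?_ hstep
    exact mul_le_mul (hseq _ (by simp only [Fin.lt_def]; omega)) (ih (by omega)) (by positivity)
      (sq_nonneg _)

lemma pow_mul_le_norm_sub_starProjection_span_compl (hg : ∀ j, ‖g j‖ ≤ 1) {c : ℝ} (hc : 0 ≤ c)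
    (i : Fin p)
    (hseq : ∀ j, i < j → c ≤ ‖g j - (span ℝ (g '' Set.Iio j)).starProjection (g j)‖ ^ 2) :
    c ^ (p - 1 - i) * ‖g i - (span ℝ (g '' Set.Iio i)).starProjection (g i)‖ ^ 2 ≤
      ‖g i - (span ℝ (g '' {i}ᶜ)).starProjection (g i)‖ ^ 2 := by
  have hall : {j : Fin p | (j : ℕ) < p ∧ j ≠ i} = {i}ᶜ := by
    ext j; simp
  simpa only [hall] using pow_mul_le_norm_sub_starProjection_span_lt_ne hg hc hseq i.isLt le_rfl

end LeaveOneOut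

theorem stmt18_general (p : ℕ) (hp : 0 < p) (η : ℝ)
    (g : Fin p → EuclideanSpace ℝ (Fin p))
    (hunit : ∀ i, ‖g i‖ = 1)
    (hseq : ∀ i : Fin p, 0 < (i : ℕ) →
      η ^ 2 ≤ ‖g i - (Submodule.orthogonalProjection
        (Submodule.span ℝ (g '' {j | (j : ℕ) < (i : ℕ)})) (g i) :
          EuclideanSpace ℝ (Fin p))‖ ^ 2) :
    (∀ i : Fin p,
      η ^ (2 * (p - 1 - (i : ℕ))) * (η ^ 2) ^ (if (i : ℕ) = 0 then 0 else 1) ≤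
        ‖g i - (Submodule.orthogonalProjection
          (Submodule.span ℝ (g '' {j | j ≠ i})) (g i) :
            EuclideanSpace ℝ (Fin p))‖ ^ 2) ∧
    η ^ (2 * (p - 1)) ≤
      ‖g ⟨0, hp⟩ - (Submodule.orthogonalProjection
        (Submodule.span ℝ (g '' {j | j ≠ ⟨0, hp⟩})) (g ⟨0, hp⟩) :
          EuclideanSpace ℝ (Fin p))‖ ^ 2 := by
  have hres : ∀ i : Fin p,
      η ^ (2 * (p - 1 - (i : ℕ))) * (η ^ 2) ^ (if (i : ℕ) = 0 then 0 else 1) ≤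
        ‖g i - (span ℝ (g '' {j | j ≠ i})).starProjection (g i)‖ ^ 2 := by
    intro i
    have hstart : (η ^ 2) ^ (if (i : ℕ) = 0 then 0 else 1) ≤
        ‖g i - (span ℝ (g '' Set.Iio i)).starProjection (g i)‖ ^ 2 := by
      split_ifs with hi
      · have hIio : Set.Iio i = ∅ := by ext j; simp [Fin.lt_def, hi]
        simp [hIio, hunit]
      · exact (pow_one _).trans_le (hseq i (Nat.pos_of_ne_zero hi))
    rw [pow_mul]
    exact (mul_le_mul_of_nonneg_left hstart (by positivity)).trans
      (pow_mul_le_norm_sub_starProjection_span_compl (fun j ↦ (hunit j).le) (sq_nonneg η) i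
        fun j hij ↦ hseq j (lt_of_le_of_lt (Nat.zero_le _) hij))
  exact ⟨hres, by simpa using hres ⟨0, hp⟩⟩

/-- if each `gᵢ` has a component of squared norm at least `η²` orthogonal to
the span of the previous vectors, then the leave-one-out residuals satisfy
`‖gᵢ - Π_{g₋ᵢ}(gᵢ)‖² ≥ η^{2(p-1-i)} (η²)^{𝟙{i>0}}` (0-indexed), and in particular
`‖g₀ - Π_{g₋₀}(g₀)‖² ≥ η^{2(p-1)}`. -/
theorem stmt18 (p : ℕ) (hp : 0 < p) (η : ℝ) (hη0 : 0 < η) (hη1 : η < 1)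
    (g : Fin p → EuclideanSpace ℝ (Fin p))
    (hunit : ∀ i, ‖g i‖ = 1)
    (hseq : ∀ i : Fin p, 0 < (i : ℕ) →
      η ^ 2 ≤ ‖g i - (Submodule.orthogonalProjection
        (Submodule.span ℝ (g '' {j | (j : ℕ) < (i : ℕ)})) (g i) :
          EuclideanSpace ℝ (Fin p))‖ ^ 2) :
    (∀ i : Fin p,
      η ^ (2 * (p - 1 - (i : ℕ))) * (η ^ 2) ^ (if (i : ℕ) = 0 then 0 else 1) ≤
        ‖g i - (Submodule.orthogonalProjection
          (Submodule.span ℝ (g '' {j | j ≠ i})) (g i) :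
            EuclideanSpace ℝ (Fin p))‖ ^ 2) ∧
    η ^ (2 * (p - 1)) ≤
      ‖g ⟨0, hp⟩ - (Submodule.orthogonalProjection
        (Submodule.span ℝ (g '' {j | j ≠ ⟨0, hp⟩})) (g ⟨0, hp⟩) :
          EuclideanSpace ℝ (Fin p))‖ ^ 2 :=
  stmt18_general p hp η g hunit hseq
end

section
/- Let N be a symmetric positive definite (d-1)×(d-1) matrix and a ∈ ℝ^{d-1}, and define the symmetric d×d matrix M = [[1, a'],[a, aa' - N]]. Then M has exactly one positive eigenvalue and d-1 negative eigenvalues; moreover λ_max(M) ≥ 1, and (with eigenvalues of M in nondecreasing order λ₁(M) ≤ ... ≤ λ_d(M) and eigenvalues of N in nondecreasing order) λ_{i+1}(M) ≥ -λ_{d-i}(N) for i = 1,...,d-1, so that -λ_{d-i+1}(M)/λ_d(M) ≤ λ_i(N) for each i = 1,...,d-1. -/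
/-!
Write `M = diag(0, -N) + v vᵀ` with `v = (1, a)`. On the hyperplane `v⊥`, parametrised by
`y ↦ (-(a ⬝ y), y)`, the quadratic form of `M` is `-yᵀ N y`; this is negative definite, so by
min-max `M` has `n` negative eigenvalues, and on the image of the span of the eigenvectors of the
`j + 1` smallest eigenvalues of `N` it is at least `-ν_j |x|²` (as `ν_j > 0` and the
parametrisation only lengthens vectors), which is the interlacing inequality. At `e₁` the form
is `1`, so `λ_max(M) ≥ 1`, and dividing the interlacing inequality by `λ_max(M)` gives the last
claim. The min-max bounds come from dimension counting against spans of eigenvectors.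
-/

open Matrix Module

namespace Matrix.IsHermitian

variable {ι : Type*} [Fintype ι] [DecidableEq ι] {A : Matrix ι ι ℝ} (hA : A.IsHermitian)

noncomputable def eigenvectorSpan (s : Set ι) : Submodule ℝ (ι → ℝ) :=
  Submodule.span ℝ ((fun j => ⇑(hA.eigenvectorBasis j)) '' s)

lemma eigenvectorBasis_dotProduct (i j : ι) :
    ⇑(hA.eigenvectorBasis i) ⬝ᵥ ⇑(hA.eigenvectorBasis j) = if i = j then 1 else 0 := by
  rw [← orthonormal_iff_ite.mp hA.eigenvectorBasis.orthonormal i j, dotProduct_comm]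
  simp [EuclideanSpace.inner_eq_star_dotProduct]

lemma sum_eigenvectorBasis_dotProduct_mul (x y : ι → ℝ) :
    ∑ i, (⇑(hA.eigenvectorBasis i) ⬝ᵥ x) * (⇑(hA.eigenvectorBasis i) ⬝ᵥ y) = x ⬝ᵥ y := by
  simpa [EuclideanSpace.inner_eq_star_dotProduct, dotProduct_comm] using
    hA.eigenvectorBasis.sum_inner_mul_inner (WithLp.toLp 2 x) (WithLp.toLp 2 y)

lemma eigenvectorBasis_dotProduct_mulVec (i : ι) (x : ι → ℝ) :
    ⇑(hA.eigenvectorBasis i) ⬝ᵥ A *ᵥ x = hA.eigenvalues i * (⇑(hA.eigenvectorBasis i) ⬝ᵥ x) := by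
  rw [dotProduct_mulVec, ← mulVec_transpose, (isHermitian_iff_isSymm.mp hA).eq,
    mulVec_eigenvectorBasis, smul_dotProduct, smul_eq_mul]

lemma dotProduct_self_eq_sum (x : ι → ℝ) :
    x ⬝ᵥ x = ∑ i, (⇑(hA.eigenvectorBasis i) ⬝ᵥ x) ^ 2 := by
  simp only [sq, hA.sum_eigenvectorBasis_dotProduct_mul]

lemma dotProduct_mulVec_eq_sum (x : ι → ℝ) :
    x ⬝ᵥ A *ᵥ x = ∑ i, hA.eigenvalues i * (⇑(hA.eigenvectorBasis i) ⬝ᵥ x) ^ 2 := by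
  rw [← hA.sum_eigenvectorBasis_dotProduct_mul]
  refine Finset.sum_congr rfl fun i _ => ?_
  rw [eigenvectorBasis_dotProduct_mulVec]
  ring

lemma eigenvectorBasis_dotProduct_eq_zero {s : Set ι} {x : ι → ℝ}
    (hx : x ∈ hA.eigenvectorSpan s) {i : ι} (hi : i ∉ s) :
    ⇑(hA.eigenvectorBasis i) ⬝ᵥ x = 0 := by
  suffices hA.eigenvectorSpan s ≤ LinearMap.ker (dotProductBilin ℝ ℝ ⇑(hA.eigenvectorBasis i))
    from this hx
  rw [eigenvectorSpan, Submodule.span_le]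
  rintro _ ⟨j, hj, rfl⟩
  simp [eigenvectorBasis_dotProduct, show i ≠ j from fun h => hi (h ▸ hj)]

lemma finrank_eigenvectorSpan (s : Finset ι) :
    finrank ℝ (hA.eigenvectorSpan s) = s.card := by
  have hli : LinearIndependent ℝ fun j => ⇑(hA.eigenvectorBasis j) :=
    hA.eigenvectorBasis.orthonormal.linearIndependent.map'
      (WithLp.linearEquiv 2 ℝ (ι → ℝ)).toLinearMap (LinearEquiv.ker _)
  rw [eigenvectorSpan, Set.image_eq_range]
  exact (finrank_span_eq_card (hli.comp _ Subtype.val_injective)).trans (Fintype.card_coe s)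

lemma dotProduct_mulVec_le_of_mem_eigenvectorSpan {s : Set ι} {c : ℝ}
    (hs : ∀ i ∈ s, hA.eigenvalues i ≤ c) {x : ι → ℝ} (hx : x ∈ hA.eigenvectorSpan s) :
    x ⬝ᵥ A *ᵥ x ≤ c * (x ⬝ᵥ x) := by
  rw [hA.dotProduct_mulVec_eq_sum, hA.dotProduct_self_eq_sum, Finset.mul_sum]
  refine Finset.sum_le_sum fun i _ => ?_
  by_cases hi : i ∈ s
  · exact mul_le_mul_of_nonneg_right (hs i hi) (sq_nonneg _)
  · simp [hA.eigenvectorBasis_dotProduct_eq_zero hx hi]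

lemma mul_dotProduct_le_of_mem_eigenvectorSpan {s : Set ι} {c : ℝ}
    (hs : ∀ i ∈ s, c ≤ hA.eigenvalues i) {x : ι → ℝ} (hx : x ∈ hA.eigenvectorSpan s) :
    c * (x ⬝ᵥ x) ≤ x ⬝ᵥ A *ᵥ x := by
  rw [hA.dotProduct_mulVec_eq_sum, hA.dotProduct_self_eq_sum, Finset.mul_sum]
  refine Finset.sum_le_sum fun i _ => ?_
  by_cases hi : i ∈ s
  · exact mul_le_mul_of_nonneg_right (hs i hi) (sq_nonneg _)
  · simp [hA.eigenvectorBasis_dotProduct_eq_zero hx hi]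

/-! `μ` lists the eigenvalues of `A` in nondecreasing order, `μ (e i)` being the eigenvalue
of the `i`-th eigenvector. -/

variable {m : ℕ} {μ : Fin m → ℝ} {e : ι ≃ Fin m}

lemma eigenvalues_le_of_mem_map_Iic (hμmono : Monotone μ) (hμ : ∀ i, μ (e i) = hA.eigenvalues i)
    (k : Fin m) : ∀ i ∈ ((Finset.Iic k).map e.symm.toEmbedding : Set ι), hA.eigenvalues i ≤ μ k :=
  fun i hi => hμ i ▸ hμmono (Finset.mem_Iic.mp (Finset.mem_map_equiv.mp hi))

lemma le_eigenvalues_of_mem_map_Ici (hμmono : Monotone μ) (hμ : ∀ i, μ (e i) = hA.eigenvalues i)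
    (k : Fin m) : ∀ i ∈ ((Finset.Ici k).map e.symm.toEmbedding : Set ι), μ k ≤ hA.eigenvalues i :=
  fun i hi => hμ i ▸ hμmono (Finset.mem_Ici.mp (Finset.mem_map_equiv.mp hi))

theorem le_of_forall_mul_dotProduct_le (hμmono : Monotone μ)
    (hμ : ∀ i, μ (e i) = hA.eigenvalues i) {V : Submodule ℝ (ι → ℝ)} {c : ℝ}
    (hV : ∀ x ∈ V, c * (x ⬝ᵥ x) ≤ x ⬝ᵥ A *ᵥ x) {k : Fin m} (hk : m ≤ finrank ℝ V + k) :
    c ≤ μ k := by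
  by_contra! hlt
  have hdisj : Disjoint V (hA.eigenvectorSpan ((Finset.Iic k).map e.symm.toEmbedding)) := by
    refine Submodule.disjoint_def.mpr fun x hxV hxW => dotProduct_self_eq_zero.mp ?_
    have h₁ := hV x hxV
    have h₂ := hA.dotProduct_mulVec_le_of_mem_eigenvectorSpan
      (hA.eigenvalues_le_of_mem_map_Iic hμmono hμ k) hxW
    have h₀ : 0 ≤ x ⬝ᵥ x := Finset.sum_nonneg fun i _ => mul_self_nonneg (x i)
    exact le_antisymm (by nlinarith) h₀
  have := Submodule.finrank_add_finrank_le_of_disjoint hdisj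
  rw [finrank_eigenvectorSpan, Finset.card_map, Fin.card_Iic, finrank_fintype_fun_eq_card,
    Fintype.card_congr e, Fintype.card_fin] at this
  omega

theorem lt_of_forall_dotProduct_lt (hμmono : Monotone μ)
    (hμ : ∀ i, μ (e i) = hA.eigenvalues i) {V : Submodule ℝ (ι → ℝ)} {c : ℝ}
    (hV : ∀ x ∈ V, x ≠ 0 → x ⬝ᵥ A *ᵥ x < c * (x ⬝ᵥ x)) {k : Fin m} (hk : k < finrank ℝ V) :
    μ k < c := by
  by_contra! hle
  have hdisj : Disjoint V (hA.eigenvectorSpan ((Finset.Ici k).map e.symm.toEmbedding)) := by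
    refine Submodule.disjoint_def.mpr fun x hxV hxW => ?_
    by_contra hx
    have h₁ := hV x hxV hx
    have h₂ := hA.mul_dotProduct_le_of_mem_eigenvectorSpan
      (hA.le_eigenvalues_of_mem_map_Ici hμmono hμ k) hxW
    have h₀ : 0 ≤ x ⬝ᵥ x := Finset.sum_nonneg fun i _ => mul_self_nonneg (x i)
    nlinarith
  have := Submodule.finrank_add_finrank_le_of_disjoint hdisj
  rw [finrank_eigenvectorSpan, Finset.card_map, Fin.card_Ici, finrank_fintype_fun_eq_card,
    Fintype.card_congr e, Fintype.card_fin] at this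
  omega

end Matrix.IsHermitian

section Bordered

variable {κ : Type*} [Fintype κ] (a : κ → ℝ) (N : Matrix κ κ ℝ)

noncomputable def borderedMatrix : Matrix (Unit ⊕ κ) (Unit ⊕ κ) ℝ :=
  fromBlocks 1 (of fun _ j => a j) (of fun i _ => a i) (vecMulVec a a - N)

lemma sumElim_dotProduct_borderedMatrix_mulVec (t : ℝ) (y : κ → ℝ) :
    Sum.elim (fun _ => t) y ⬝ᵥ borderedMatrix a N *ᵥ Sum.elim (fun _ => t) y =
      (t + a ⬝ᵥ y) ^ 2 - y ⬝ᵥ N *ᵥ y := by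
  have h₁ : of (fun _ j => a j) *ᵥ y = fun _ : Unit => a ⬝ᵥ y := rfl
  have h₂ : of (fun i _ => a i) *ᵥ (fun _ : Unit => t) = t • a := by
    ext i
    simp [mulVec, dotProduct, mul_comm]
  rw [borderedMatrix, fromBlocks_mulVec, sumElim_dotProduct_sumElim, Sum.elim_comp_inl,
    Sum.elim_comp_inr, h₁, h₂, sub_mulVec, vecMulVec_mulVec, op_smul_eq_smul, one_mulVec]
  simp only [dotProduct_add, dotProduct_sub, dotProduct_smul, smul_eq_mul, dotProduct_comm y a]
  simp only [dotProduct, Fintype.sum_unique]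
  ring

/-- The image is the hyperplane orthogonal to `(1, a)`, on which the rank-one part of
`borderedMatrix a N` vanishes. -/
noncomputable def hyperplaneEmbedding : (κ → ℝ) →ₗ[ℝ] (Unit ⊕ κ → ℝ) where
  toFun y := Sum.elim (fun _ => -(a ⬝ᵥ y)) y
  map_add' _ _ := by
    ext (_ | _) <;> simp [dotProduct_add, add_comm]
  map_smul' _ _ := by
    ext (_ | _) <;> simp [dotProduct_smul]

lemma hyperplaneEmbedding_injective : Function.Injective (hyperplaneEmbedding a) :=
  fun _ _ h => funext fun j => congrFun h (Sum.inr j)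

lemma hyperplaneEmbedding_dotProduct_self (y : κ → ℝ) :
    hyperplaneEmbedding a y ⬝ᵥ hyperplaneEmbedding a y = (a ⬝ᵥ y) ^ 2 + y ⬝ᵥ y := by
  simp [hyperplaneEmbedding, dotProduct, sq]

lemma hyperplaneEmbedding_dotProduct_borderedMatrix_mulVec (y : κ → ℝ) :
    hyperplaneEmbedding a y ⬝ᵥ borderedMatrix a N *ᵥ hyperplaneEmbedding a y =
      -(y ⬝ᵥ N *ᵥ y) := by
  simp [hyperplaneEmbedding, sumElim_dotProduct_borderedMatrix_mulVec]

end Bordered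

lemma Matrix.PosDef.pos_of_eigenvalues_eq {ι : Type*} [Fintype ι] [DecidableEq ι]
    {A : Matrix ι ι ℝ} (hA : A.PosDef) {m : ℕ} {μ : Fin m → ℝ} {e : ι ≃ Fin m}
    (hμ : ∀ i, μ (e i) = hA.1.eigenvalues i) (k : Fin m) : 0 < μ k := by
  rw [← e.apply_symm_apply k, hμ]
  exact hA.eigenvalues_pos _

section BorderedSpectrum

variable {κ : Type*} [Fintype κ] [DecidableEq κ] {a : κ → ℝ} {N : Matrix κ κ ℝ}
  (hM : (borderedMatrix a N).IsHermitian) {n : ℕ} {μ : Fin (n + 1) → ℝ}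
  {e : Unit ⊕ κ ≃ Fin (n + 1)}

theorem one_le_borderedMatrix_eigenvalue_last (hμmono : Monotone μ)
    (hμ : ∀ i, μ (e i) = hM.eigenvalues i) : 1 ≤ μ (Fin.last n) := by
  let v : Unit ⊕ κ → ℝ := Sum.elim (fun _ => 1) 0
  have hv : v ≠ 0 := fun h => one_ne_zero (congrFun h (Sum.inl ()))
  refine hM.le_of_forall_mul_dotProduct_le hμmono hμ (V := ℝ ∙ v) (fun x hx => ?_) ?_
  · obtain ⟨t, rfl⟩ := Submodule.mem_span_singleton.mp hx
    have ht : t • v = Sum.elim (fun _ => t) 0 := by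
      ext (_ | _) <;> simp [v]
    rw [ht, sumElim_dotProduct_borderedMatrix_mulVec]
    simp [dotProduct, sq]
  · rw [finrank_span_singleton hv, Fin.val_last, add_comm]

theorem borderedMatrix_eigenvalue_neg (hN : N.PosDef) (hμmono : Monotone μ)
    (hμ : ∀ i, μ (e i) = hM.eigenvalues i) {i : Fin (n + 1)} (hi : (i : ℕ) < n) : μ i < 0 := by
  have hcard : Fintype.card κ = n := by
    simpa [add_comm] using Fintype.card_congr e
  refine hM.lt_of_forall_dotProduct_lt hμmono hμ (V := LinearMap.range (hyperplaneEmbedding a))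
    ?_ ?_
  · rintro _ ⟨y, rfl⟩ hx
    have hy : y ≠ 0 := by
      rintro rfl
      exact hx (map_zero _)
    rw [hyperplaneEmbedding_dotProduct_borderedMatrix_mulVec, zero_mul, neg_neg_iff_pos]
    simpa using hN.dotProduct_mulVec_pos hy
  · rwa [LinearMap.finrank_range_of_inj (hyperplaneEmbedding_injective a),
      finrank_fintype_fun_eq_card, hcard]

theorem neg_eigenvalue_rev_le_borderedMatrix_eigenvalue_succ (hN : N.PosDef)
    (hμmono : Monotone μ) (hμ : ∀ i, μ (e i) = hM.eigenvalues i) {ν : Fin n → ℝ}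
    (hνmono : Monotone ν) {eN : κ ≃ Fin n} (hν : ∀ i, ν (eN i) = hN.1.eigenvalues i)
    (i : Fin n) : -ν i.rev ≤ μ i.succ := by
  let Y := hN.1.eigenvectorSpan ((Finset.Iic i.rev).map eN.symm.toEmbedding)
  have hνpos := hN.pos_of_eigenvalues_eq hν i.rev
  refine hM.le_of_forall_mul_dotProduct_le hμmono hμ (V := Y.map (hyperplaneEmbedding a)) ?_ ?_
  · rintro _ ⟨y, hy, rfl⟩
    have hNy := hN.1.dotProduct_mulVec_le_of_mem_eigenvectorSpan
      (hN.1.eigenvalues_le_of_mem_map_Iic hνmono hν _) hy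
    rw [hyperplaneEmbedding_dotProduct_borderedMatrix_mulVec, hyperplaneEmbedding_dotProduct_self]
    nlinarith [sq_nonneg (a ⬝ᵥ y)]
  · rw [← (Submodule.equivMapOfInjective _ (hyperplaneEmbedding_injective a) Y).finrank_eq,
      hN.1.finrank_eigenvectorSpan, Finset.card_map, Fin.card_Iic, Fin.val_succ, Fin.val_rev]
    omega

end BorderedSpectrum

/-- for `N` symmetric positive definite `(d-1)×(d-1)` (here `n×n`) and
`a ∈ ℝ^{d-1}`, the symmetric matrix `M = [[1, a'],[a, aa' - N]]` has exactly one positive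
eigenvalue and `d-1` negative eigenvalues, its largest eigenvalue is at least `1`, and the
interlacing inequalities `λ_{i+1}(M) ≥ -λ_{d-i}(N)` hold, so that
`-λ_{d-i+1}(M)/λ_d(M) ≤ λ_i(N)` (eigenvalues in nondecreasing order). -/
theorem stmt19 (n : ℕ) (N : Matrix (Fin n) (Fin n) ℝ) (hN : N.PosDef)
    (a : Fin n → ℝ)
    (M : Matrix (Unit ⊕ Fin n) (Unit ⊕ Fin n) ℝ)
    (hMdef : M = Matrix.fromBlocks (1 : Matrix Unit Unit ℝ)
      (Matrix.of fun _ j => a j) (Matrix.of fun i _ => a i)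
      (Matrix.vecMulVec a a - N))
    (hM : M.IsHermitian)
    -- `μ` lists the eigenvalues of `M` in nondecreasing order
    (μ : Fin (n + 1) → ℝ) (hμmono : Monotone μ)
    (eM : (Unit ⊕ Fin n) ≃ Fin (n + 1)) (hμ : ∀ i, μ (eM i) = hM.eigenvalues i)
    -- `ν` lists the eigenvalues of `N` in nondecreasing order
    (ν : Fin n → ℝ) (hνmono : Monotone ν)
    (eN : Fin n ≃ Fin n) (hν : ∀ i, ν (eN i) = hN.1.eigenvalues i) :
    (0 < μ ⟨n, by omega⟩) ∧
    (∀ i : Fin (n + 1), (i : ℕ) < n → μ i < 0) ∧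
    (1 ≤ μ ⟨n, by omega⟩) ∧
    (∀ i : Fin n, -ν ⟨n - 1 - (i : ℕ), by have := i.isLt; omega⟩ ≤ μ i.succ) ∧
    (∀ i : Fin n, -μ ⟨n - (i : ℕ), by omega⟩ / μ ⟨n, by omega⟩ ≤ ν i) := by
  subst hMdef
  have hmax : 1 ≤ μ ⟨n, by omega⟩ := one_le_borderedMatrix_eigenvalue_last hM hμmono hμ
  have hinterlace := neg_eigenvalue_rev_le_borderedMatrix_eigenvalue_succ hM hN hμmono hμ hνmono hν
  refine ⟨by linarith, fun i hi => borderedMatrix_eigenvalue_neg hM hN hμmono hμ hi, hmax,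
    fun i => ?_, fun i => ?_⟩
  · convert hinterlace i using 3
    ext
    simp only [Fin.val_rev]
    omega
  · have hνpos := hN.pos_of_eigenvalues_eq hν i
    have h := hinterlace i.rev
    rw [Fin.rev_rev] at h
    have hidx : i.rev.succ = ⟨n - i, by omega⟩ := by
      ext
      simp only [Fin.val_succ, Fin.val_rev]
      omega
    rw [hidx] at h
    rw [div_le_iff₀ (by linarith)]
    nlinarith
end
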